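/- Log-Sobolev inequality on the discrete cube with constant 4: for any f : {-1,1}ⁿ → ℝ₊ with ∫ f dμ = 1 (μ uniform), H_μ(f) ≤ 4 Σ_{i=1}ⁿ ∫ (∂_i √f)² dμ. -/

import Mathlib

/-!
Tensorization by successive averaging. Let `Eᵢ g` be the average of `g` over the `i`-th
coordinate. With `m = (a + b) / 2`, the two-point inequality
`(a log a + b log b) / 2 - m log m ≤ (a - b)² / (4m) ≤ (√a - √b)²`
(from `log t ≤ t - 1` and `(a - b)² ≤ 2 (√a - √b)² (a + b)`) bounds the entropy lost in passing
from `g` to `Eᵢ g` by the square-root Dirichlet form `Σₓ (√g(x, xᵢ = 1) - √g(x, xᵢ = -1))²`.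
Averaging in another coordinate can only decrease that form: applied to `√g` this is the reverse
triangle inequality in `ℓ²`. Averaging out all coordinates one after another therefore loses at
most the sum of the forms in entropy; it ends at the constant function equal to the mean of `g`,
so the entropy lost along the way is all of `Ent g`. The constant `4` is the square of the `1/2` in `∂ᵢ`.
-/

open Finset Function

namespace BoolCube

lemma mul_log_sub_mul_log_le {t m : ℝ} (ht : 0 < t) (hm : 0 < m) :
    t * Real.log t - t * Real.log m ≤ t * (t - m) / m := by
  have h := Real.log_le_sub_one_of_pos (div_pos ht hm)
  rw [Real.log_div ht.ne' hm.ne'] at h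
  calc t * Real.log t - t * Real.log m = t * (Real.log t - Real.log m) := by ring
    _ ≤ t * (t / m - 1) := mul_le_mul_of_nonneg_left h ht.le
    _ = t * (t - m) / m := by field_simp

lemma two_point_entropy_le {a b : ℝ} (ha : 0 < a) (hb : 0 < b) :
    (a * Real.log a + b * Real.log b) / 2 - (a + b) / 2 * Real.log ((a + b) / 2)
      ≤ (a - b) ^ 2 / (2 * (a + b)) := by
  have hm : 0 < (a + b) / 2 := by positivity
  have hla := mul_log_sub_mul_log_le ha hm
  have hlb := mul_log_sub_mul_log_le hb hm
  have hsum : (a * (a - (a + b) / 2) / ((a + b) / 2) + b * (b - (a + b) / 2) / ((a + b) / 2)) / 2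
      = (a - b) ^ 2 / (2 * (a + b)) := by
    field_simp; ring
  linarith

lemma sq_sub_le_two_mul_sq_sqrt_sub_mul_add {a b : ℝ} (ha : 0 ≤ a) (hb : 0 ≤ b) :
    (a - b) ^ 2 ≤ 2 * (√a - √b) ^ 2 * (a + b) := by
  have hfac : (a - b) ^ 2 = (√a - √b) ^ 2 * (√a + √b) ^ 2 := by
    rw [← mul_pow, show (√a - √b) * (√a + √b) = √a ^ 2 - √b ^ 2 by ring,
      Real.sq_sqrt ha, Real.sq_sqrt hb]
  have hsum : (√a + √b) ^ 2 ≤ 2 * (a + b) := by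
    nlinarith [sq_nonneg (√a - √b), Real.sq_sqrt ha, Real.sq_sqrt hb]
  rw [hfac]
  nlinarith [sq_nonneg (√a - √b)]

lemma two_point_entropy_le_sq_sqrt_sub {a b : ℝ} (ha : 0 < a) (hb : 0 < b) :
    (a * Real.log a + b * Real.log b) / 2 - (a + b) / 2 * Real.log ((a + b) / 2)
      ≤ (√a - √b) ^ 2 := by
  refine (two_point_entropy_le ha hb).trans ?_
  rw [div_le_iff₀ (by positivity)]
  linarith [sq_sub_le_two_mul_sq_sqrt_sub_mul_add ha.le hb.le]

lemma sqrt_mean_sq_sub_sqrt_mean_sq_sq_le (u₁ u₂ v₁ v₂ : ℝ) :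
    (√((u₁ ^ 2 + u₂ ^ 2) / 2) - √((v₁ ^ 2 + v₂ ^ 2) / 2)) ^ 2
      ≤ ((u₁ - v₁) ^ 2 + (u₂ - v₂) ^ 2) / 2 := by
  set p := √((u₁ ^ 2 + u₂ ^ 2) / 2)
  set q := √((v₁ ^ 2 + v₂ ^ 2) / 2)
  have hp : p ^ 2 = (u₁ ^ 2 + u₂ ^ 2) / 2 := Real.sq_sqrt (by positivity)
  have hq : q ^ 2 = (v₁ ^ 2 + v₂ ^ 2) / 2 := Real.sq_sqrt (by positivity)
  have cauchy_schwarz : u₁ * v₁ + u₂ * v₂ ≤ 2 * (p * q) := by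
    refine le_trans (le_abs_self _) (abs_le_of_sq_le_sq' ?_ (by positivity)).2
    rw [sq_abs, mul_pow, mul_pow, hp, hq]
    nlinarith [sq_nonneg (u₁ * v₂ - u₂ * v₁)]
  nlinarith

lemma sqrt_mean_sub_sqrt_mean_sq_le {a₁ a₂ b₁ b₂ : ℝ} (ha₁ : 0 ≤ a₁) (ha₂ : 0 ≤ a₂)
    (hb₁ : 0 ≤ b₁) (hb₂ : 0 ≤ b₂) :
    (√((a₁ + a₂) / 2) - √((b₁ + b₂) / 2)) ^ 2
      ≤ ((√a₁ - √b₁) ^ 2 + (√a₂ - √b₂) ^ 2) / 2 := by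
  simpa only [Real.sq_sqrt ha₁, Real.sq_sqrt ha₂, Real.sq_sqrt hb₁, Real.sq_sqrt hb₂] using
    sqrt_mean_sq_sub_sqrt_mean_sq_sq_le (√a₁) (√a₂) (√b₁) (√b₂)

variable {ι : Type*} [DecidableEq ι]

noncomputable def coordAvg (i : ι) (g : (ι → Bool) → ℝ) : (ι → Bool) → ℝ :=
  fun x => (g (update x i true) + g (update x i false)) / 2

noncomputable def iterAvg (l : List ι) (g : (ι → Bool) → ℝ) : (ι → Bool) → ℝ :=
  l.foldr coordAvg g

variable {g : (ι → Bool) → ℝ}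

@[simp] lemma iterAvg_cons (i : ι) (l : List ι) :
    iterAvg (i :: l) g = coordAvg i (iterAvg l g) := rfl

lemma coordAvg_pos (i : ι) (hg : ∀ x, 0 < g x) (x : ι → Bool) : 0 < coordAvg i g x :=
  div_pos (add_pos (hg _) (hg _)) two_pos

lemma iterAvg_pos (l : List ι) (hg : ∀ x, 0 < g x) (x : ι → Bool) : 0 < iterAvg l g x := by
  induction l generalizing x with
  | nil => exact hg x
  | cons i l ih => exact coordAvg_pos i ih x

lemma iterAvg_eq_of_forall_notMem_eq (l : List ι) {x y : ι → Bool}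
    (hxy : ∀ j ∉ l, x j = y j) : iterAvg l g x = iterAvg l g y := by
  induction l generalizing x y with
  | nil => rw [funext fun j => hxy j List.not_mem_nil]
  | cons i l ih =>
    have hupdate (b : Bool) : iterAvg l g (update x i b) = iterAvg l g (update y i b) :=
      ih fun j hj => by
        by_cases hji : j = i
        · simp [hji]
        · simpa [hji] using hxy j (by simp [hji, hj])
    simp only [iterAvg_cons, coordAvg, hupdate]

variable [Fintype ι]

noncomputable def sqrtDirichlet (i : ι) (g : (ι → Bool) → ℝ) : ℝ :=
  ∑ x, (√(g (update x i true)) - √(g (update x i false))) ^ 2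

noncomputable def entropy (g : (ι → Bool) → ℝ) : ℝ :=
  ∑ x, g x * Real.log (g x) - (∑ x, g x) * Real.log ((∑ x, g x) / Fintype.card (ι → Bool))

lemma sum_coordAvg (i : ι) (g : (ι → Bool) → ℝ) : ∑ x, coordAvg i g x = ∑ x, g x := by
  have hflip : Involutive fun x : ι → Bool => update x i (!x i) := by
    intro x
    ext j
    by_cases hji : j = i <;> simp [hji]
  have hpair (x : ι → Bool) :
      g (update x i true) + g (update x i false) = g x + g (update x i (!x i)) := by
    have hfix := update_eq_self i x
    cases hx : x i <;> rw [hx] at hfix <;> simp [hfix, add_comm]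
  calc ∑ x, coordAvg i g x = (∑ x, g x + ∑ x, g (update x i (!x i))) / 2 := by
        simp only [coordAvg, hpair, ← sum_div, sum_add_distrib]
    _ = ∑ x, g x := by
        rw [Fintype.sum_bijective _ hflip.bijective _ _ fun _ => rfl]; ring

lemma sum_iterAvg (l : List ι) (g : (ι → Bool) → ℝ) : ∑ x, iterAvg l g x = ∑ x, g x := by
  induction l with
  | nil => rfl
  | cons i l ih => rw [iterAvg_cons, sum_coordAvg, ih]

lemma iterAvg_toList_univ (g : (ι → Bool) → ℝ) (x : ι → Bool) :
    iterAvg univ.toList g x = (∑ y, g y) / Fintype.card (ι → Bool) := by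
  have hconst (y : ι → Bool) : iterAvg univ.toList g y = iterAvg univ.toList g x :=
    iterAvg_eq_of_forall_notMem_eq _ fun j hj => absurd (mem_toList.2 (mem_univ j)) hj
  rw [← sum_iterAvg univ.toList g, sum_congr rfl fun y _ => hconst y, sum_const, card_univ,
    nsmul_eq_mul]
  field_simp

lemma entropy_sub_entropy_coordAvg_le (i : ι) (hg : ∀ x, 0 < g x) :
    ∑ x, g x * Real.log (g x) - ∑ x, coordAvg i g x * Real.log (coordAvg i g x)
      ≤ sqrtDirichlet i g := by
  rw [← sum_coordAvg i fun x => g x * Real.log (g x), sqrtDirichlet, ← sum_sub_distrib]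
  exact sum_le_sum fun x _ => two_point_entropy_le_sq_sqrt_sub (hg _) (hg _)

lemma sqrtDirichlet_coordAvg_le {i j : ι} (hij : i ≠ j) (hg : ∀ x, 0 ≤ g x) :
    sqrtDirichlet i (coordAvg j g) ≤ sqrtDirichlet i g := by
  rw [sqrtDirichlet, sqrtDirichlet,
    ← sum_coordAvg j fun y => (√(g (update y i true)) - √(g (update y i false))) ^ 2]
  refine sum_le_sum fun x _ => ?_
  simp only [coordAvg, update_comm hij]
  exact sqrt_mean_sub_sqrt_mean_sq_le (hg _) (hg _) (hg _) (hg _)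

lemma sqrtDirichlet_iterAvg_le {i : ι} {l : List ι} (hi : i ∉ l) (hg : ∀ x, 0 < g x) :
    sqrtDirichlet i (iterAvg l g) ≤ sqrtDirichlet i g := by
  induction l with
  | nil => rfl
  | cons j l ih =>
    rw [List.mem_cons, not_or] at hi
    exact (sqrtDirichlet_coordAvg_le hi.1 fun x => (iterAvg_pos l hg x).le).trans (ih hi.2)

lemma entropy_sub_entropy_iterAvg_le {l : List ι} (hl : l.Nodup) (hg : ∀ x, 0 < g x) :
    ∑ x, g x * Real.log (g x) - ∑ x, iterAvg l g x * Real.log (iterAvg l g x)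
      ≤ (l.map fun i => sqrtDirichlet i g).sum := by
  induction l with
  | nil => simp [iterAvg]
  | cons i l ih =>
    obtain ⟨hi, hl⟩ := List.nodup_cons.mp hl
    have hstep := entropy_sub_entropy_coordAvg_le i (iterAvg_pos l hg)
    have hdir := sqrtDirichlet_iterAvg_le hi hg
    simp only [iterAvg_cons, List.map_cons, List.sum_cons]
    linarith [ih hl]

theorem entropy_le_sum_sqrtDirichlet (hg : ∀ x, 0 < g x) :
    entropy g ≤ ∑ i, sqrtDirichlet i g := by
  have h := entropy_sub_entropy_iterAvg_le (nodup_toList univ) hg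
  simp only [iterAvg_toList_univ, sum_const, card_univ, nsmul_eq_mul, sum_map_toList] at h
  rw [entropy]
  convert h using 2
  field_simp

end BoolCube

open Finset

/-- Log-Sobolev inequality on the discrete cube `{-1,1}ⁿ` with constant 4 (coordinates
encoded by `Bool`): for strictly positive `f` with mean 1 under the uniform measure,
`∫ f log f dμ ≤ 4 Σᵢ ∫ (∂ᵢ √f)² dμ`. -/
theorem log_sobolev_cube_four (n : ℕ) (f : (Fin n → Bool) → ℝ)
    (hpos : ∀ x, 0 < f x)
    (hmean : (∑ x : Fin n → Bool, f x) / 2 ^ n = 1) :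
    (∑ x : Fin n → Bool, f x * Real.log (f x)) / 2 ^ n ≤
      4 * ∑ i : Fin n, (∑ x : Fin n → Bool,
        ((Real.sqrt (f (Function.update x i true)) -
          Real.sqrt (f (Function.update x i false))) / 2) ^ 2) / 2 ^ n := by
  have hcard : (Fintype.card (Fin n → Bool) : ℝ) = 2 ^ n := by simp
  have hentropy : BoolCube.entropy f = ∑ x, f x * Real.log (f x) := by
    rw [BoolCube.entropy, hcard, hmean, Real.log_one, mul_zero, sub_zero]
  have hpartial (i : Fin n) : ∑ x : Fin n → Bool,
      ((√(f (Function.update x i true)) - √(f (Function.update x i false))) / 2) ^ 2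
        = BoolCube.sqrtDirichlet i f / 4 := by
    rw [BoolCube.sqrtDirichlet, sum_div]
    exact sum_congr rfl fun x _ => by ring
  have hrhs : 4 * ∑ i : Fin n, BoolCube.sqrtDirichlet i f / 4 / 2 ^ n
      = (∑ i, BoolCube.sqrtDirichlet i f) / 2 ^ n := by
    rw [mul_sum, sum_div]
    exact sum_congr rfl fun i _ => by ring
  simp only [hpartial, hrhs, ← hentropy]
  gcongr
  exact BoolCube.entropy_le_sum_sqrtDirichlet hpos
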